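/- Let G be a finite group of even order and let I be a structure subgroup with I ≠ G. Then there exists a structure subgroup J of even order such that X_J is an option of X_I. -/

import Mathlib

/-- ⌈P⌉: the intersection of all maximal subgroups of `G` containing `P`
(equal to `G`, i.e. `⊤`, if no maximal subgroup contains `P`). -/
def ceilSet {G : Type*} [Group G] (P : Set G) : Subgroup G :=
  sInf {M : Subgroup G | IsCoatom M ∧ P ⊆ (M : Set G)}

/-- The deficiency of a subset `S` of a finite group `G`: the minimum size of a
subset `Q` of `G` such that `S ∪ Q` generates `G`. -/
noncomputable def deficiency {G : Type*} [Group G] [Fintype G] (S : Set G) : ℕ :=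
  sInf {n : ℕ | ∃ Q : Finset G, Q.card = n ∧ Subgroup.closure (S ∪ (Q : Set G)) = ⊤}

/-- The structure class `X_J` is an option of the structure class `X_I`. -/
def IsStructOption {G : Type*} [Group G] (I J : Subgroup G) : Prop :=
  ∃ g ∉ I, ceilSet ((I : Set G) ∪ {g}) = J

/-!
Take an involution `t` of `G`. Adjoining to `I` the element `t` if `t ∉ I`, or any element
outside `I` otherwise, gives a position whose closure `J` contains `t`, so `2 ∣ |J|`.
-/

section ceilSet

variable {G : Type*} [Group G]

theorem subset_ceilSet (P : Set G) : P ⊆ ceilSet P :=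
  fun _ hx => Subgroup.mem_sInf.2 fun _ hM => hM.2 hx

theorem ceilSet_le_of_subset {P : Set G} {M : Subgroup G} (hM : IsCoatom M)
    (hP : P ⊆ M) : ceilSet P ≤ M :=
  sInf_le ⟨hM, hP⟩

theorem ceilSet_ceilSet (P : Set G) : ceilSet (ceilSet P : Set G) = ceilSet P := by
  unfold ceilSet
  congr 1
  ext M
  exact and_congr_right fun hM =>
    ⟨fun h => (subset_ceilSet P).trans h, fun h => ceilSet_le_of_subset hM h⟩

end ceilSet

theorem Subgroup.exists_notMem_and_mem_union_singleton {G : Type*} [Group G]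
    {I : Subgroup G} (hI : I ≠ ⊤) (t : G) : ∃ g ∉ I, t ∈ (I : Set G) ∪ {g} := by
  by_cases ht : t ∈ I
  · obtain ⟨g, hg⟩ := SetLike.exists_not_mem_of_ne_top I hI
    exact ⟨g, hg, Or.inl ht⟩
  · exact ⟨t, ht, Or.inr rfl⟩

theorem exists_even_option_general {G : Type*} [Group G] [Fintype G]
    (heven : Even (Fintype.card G))
    (I : Subgroup G) (hItop : I ≠ ⊤) :
    ∃ J : Subgroup G, ceilSet (J : Set G) = J ∧ IsStructOption I J ∧
      Even (Nat.card J) := by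
  have : Fact (Nat.Prime 2) := ⟨Nat.prime_two⟩
  obtain ⟨t, ht⟩ := exists_prime_orderOf_dvd_card 2 heven.two_dvd
  obtain ⟨g, hg, htg⟩ := Subgroup.exists_notMem_and_mem_union_singleton hItop t
  refine ⟨ceilSet ((I : Set G) ∪ {g}), ceilSet_ceilSet _, ⟨g, hg, rfl⟩, ?_⟩
  exact even_iff_two_dvd.2 (ht ▸ Subgroup.orderOf_dvd_natCard _ (subset_ceilSet _ htg))

/-- In a group of even order, every structure class `X_I` with `I ≠ G` has an
option `X_J` with `J` of even order. -/
theorem exists_even_option {G : Type*} [Group G] [Fintype G]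
    (heven : Even (Fintype.card G))
    (I : Subgroup G) (hI : ceilSet (I : Set G) = I) (hItop : I ≠ ⊤) :
    ∃ J : Subgroup G, ceilSet (J : Set G) = J ∧ IsStructOption I J ∧
      Even (Nat.card J) :=
  exists_even_option_general heven I hItop
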